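/- For r ∈ {1/2, 1} and every λ ≥ 0, the Dirichlet eigenvalue counting function of the cylinder C_r satisfies W(λ) ≥ (πr/2)λ − (2r+1)√λ − 2. -/

import Mathlib

/-!
For each `m ≥ 1` with `m² < λ` the admissible `n` are those with `n < r √(λ - m²)`; with
multiplicities `1, 2, 2, …` they contribute `2 ⌈r √(λ - m²)⌉ - 1 ≥ 2 r √(λ - m²) - 1`
eigenvalues. Summing over the `⌊√λ⌋ ≤ √λ` values of `m`, and comparing the sum of the decreasing
function `t ↦ √(λ - t²)` with its integral `∫₀^√λ = πλ/4` (a quarter disc), which costs at most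
its value `√λ` at `t = 0`, gives `W(λ) ≥ (πr/2) λ - (2r + 1) √λ` for every `r > 0`.
-/

open Real

/-- Dirichlet eigenvalue counting function of the flat cylinder
`C_r = (0,π) × S¹_r`: eigenvalues are `m² + n²/r²`, `m ≥ 1`, `n ≥ 0`, with
multiplicity `1` if `n = 0` and `2` if `n ≥ 1`. -/
noncomputable def cylW (r lam : ℝ) : ℕ :=
  ∑ᶠ p : ℕ × ℕ,
    if 1 ≤ p.1 ∧ (p.1 : ℝ) ^ 2 + (p.2 : ℝ) ^ 2 / r ^ 2 < lam then
      (if p.2 = 0 then 1 else 2) else 0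

open Finset

theorem integral_zero_one_sqrt_one_sub_sq : ∫ x in (0 : ℝ)..1, √(1 - x ^ 2) = π / 4 := by
  have hint (a b : ℝ) : IntervalIntegrable (fun x : ℝ ↦ √(1 - x ^ 2)) MeasureTheory.volume a b :=
    (by fun_prop : Continuous fun x : ℝ ↦ √(1 - x ^ 2)).intervalIntegrable a b
  have hsymm : ∫ x in (-1 : ℝ)..0, √(1 - x ^ 2) = ∫ x in (0 : ℝ)..1, √(1 - x ^ 2) := by
    have h := intervalIntegral.integral_comp_neg (a := 0) (b := 1) (fun x : ℝ ↦ √(1 - x ^ 2))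
    simp only [neg_sq, neg_zero] at h
    exact h.symm
  have := intervalIntegral.integral_add_adjacent_intervals (hint (-1) 0) (hint 0 1)
  rw [hsymm, integral_sqrt_one_sub_sq] at this
  linarith

theorem integral_sqrt_sq_sub_sq (R : ℝ) (hR : 0 ≤ R) :
    ∫ x in (0 : ℝ)..R, √(R ^ 2 - x ^ 2) = π * R ^ 2 / 4 := by
  have hscale (x : ℝ) : √(R ^ 2 - (R * x) ^ 2) = R * √(1 - x ^ 2) := by
    rw [show R ^ 2 - (R * x) ^ 2 = R ^ 2 * (1 - x ^ 2) by ring, sqrt_mul (sq_nonneg R),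
      sqrt_sq hR]
  have := intervalIntegral.smul_integral_comp_mul_left (a := 0) (b := 1)
    (fun x ↦ √(R ^ 2 - x ^ 2)) R
  simp only [hscale, intervalIntegral.integral_const_mul, integral_zero_one_sqrt_one_sub_sq,
    mul_zero, mul_one, smul_eq_mul] at this
  rw [← this]
  ring

theorem sub_le_sum_sqrt_sq_sub_sq (S : ℝ) (hS : 0 ≤ S) :
    π * S ^ 2 / 4 - S ≤ ∑ m ∈ Icc 1 ⌊S⌋₊, √(S ^ 2 - (m : ℝ) ^ 2) := by
  set f : ℝ → ℝ := fun t ↦ √(S ^ 2 - t ^ 2)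
  set a := ⌊S⌋₊
  have hint (b c : ℝ) : IntervalIntegrable f MeasureTheory.volume b c :=
    (by fun_prop : Continuous f).intervalIntegrable b c
  have hanti : AntitoneOn f (Set.Icc 0 (0 + ↑(a + 1))) := fun s hs t ht _ ↦
    sqrt_le_sqrt (by nlinarith [hs.1])
  -- `√` of a negative number is `0`, so `f` vanishes beyond `S`.
  have htail : ∫ t in S..↑(a + 1), f t = 0 := by
    have hSa : S ≤ ↑(a + 1) := by push_cast; exact (Nat.lt_floor_add_one S).le
    rw [intervalIntegral.integral_congr (g := fun _ ↦ 0), intervalIntegral.integral_zero]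
    intro t ht
    rw [Set.uIcc_of_le hSa] at ht
    exact sqrt_eq_zero'.mpr (by nlinarith [ht.1])
  have hshift : ∑ m ∈ Icc 1 a, f m = ∑ k ∈ range a, f (0 + ↑(k + 1)) := by
    rw [← Ico_add_one_right_eq_Icc, sum_Ico_eq_sum_range, add_tsub_cancel_right]
    simp [add_comm]
  have hcmp := hanti.integral_le_sum
  rw [zero_add, ← intervalIntegral.integral_add_adjacent_intervals (hint 0 S) (hint S _), htail,
    add_zero, integral_sqrt_sq_sub_sq S hS, sum_range_succ', ← hshift] at hcmp
  have hf0 : f (0 + ((0 : ℕ) : ℝ)) = S := by simp [f, sqrt_sq hS]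
  rw [hf0] at hcmp
  exact sub_le_iff_le_add.mpr hcmp

theorem sum_range_one_if_zero_else_two (k : ℕ) :
    ∑ n ∈ range k, (if n = 0 then 1 else 2) = 2 * k - 1 := by
  induction k with
  | zero => rfl
  | succ k ih => rw [sum_range_succ, ih]; split_ifs <;> omega

theorem sum_range_ite_lt_eq_two_mul_ceil_sub_one (x : ℝ) (B : ℕ) (hB : x ≤ B) :
    ∑ n ∈ range B, (if (n : ℝ) < x then (if n = 0 then 1 else 2) else 0) = 2 * ⌈x⌉₊ - 1 := by
  have hfilter : (range B).filter (fun n : ℕ ↦ (n : ℝ) < x) = range ⌈x⌉₊ := by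
    ext n
    simp only [mem_filter, mem_range, Nat.lt_ceil]
    exact ⟨And.right, fun h ↦ ⟨by exact_mod_cast h.trans_le hB, h⟩⟩
  rw [← sum_filter, hfilter, sum_range_one_if_zero_else_two]

theorem two_mul_sub_one_le_two_mul_ceil_sub_one (x : ℝ) :
    2 * x - 1 ≤ ((2 * ⌈x⌉₊ - 1 : ℕ) : ℝ) := by
  rcases Nat.eq_zero_or_pos ⌈x⌉₊ with h | h
  · have := Nat.ceil_eq_zero.mp h
    rw [h]; push_cast; linarith
  · rw [Nat.cast_sub (by omega)]
    push_cast
    linarith [Nat.le_ceil x]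

theorem add_sq_div_sq_lt_iff {r a b c : ℝ} (hr : 0 < r) (hb : 0 ≤ b) :
    a + b ^ 2 / r ^ 2 < c ↔ b < r * √(c - a) := by
  rw [← div_lt_iff₀' hr, lt_sqrt (by positivity), div_pow]
  constructor <;> intro h <;> linarith

theorem cylW_eq_sum_ceil (r lam : ℝ) (hr : 0 < r) :
    cylW r lam = ∑ m ∈ Icc 1 ⌊√lam⌋₊, (2 * ⌈r * √(lam - (m : ℝ) ^ 2)⌉₊ - 1) := by
  set B := ⌈r * √lam⌉₊
  have hmono (m : ℕ) : r * √(lam - (m : ℝ) ^ 2) ≤ B :=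
    (mul_le_mul_of_nonneg_left (sqrt_le_sqrt (by nlinarith)) hr.le).trans (Nat.le_ceil _)
  have hsupp : Function.support (fun p : ℕ × ℕ ↦
      if 1 ≤ p.1 ∧ (p.1 : ℝ) ^ 2 + (p.2 : ℝ) ^ 2 / r ^ 2 < lam then
        (if p.2 = 0 then 1 else 2) else 0) ⊆ ↑(Icc 1 ⌊√lam⌋₊ ×ˢ range B) := by
    rintro ⟨m, n⟩ hp
    obtain ⟨hm, hlt⟩ : 1 ≤ m ∧ (m : ℝ) ^ 2 + (n : ℝ) ^ 2 / r ^ 2 < lam := by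
      by_contra h; simp [h] at hp
    have hm_lt : (m : ℝ) < √lam :=
      (lt_sqrt (Nat.cast_nonneg m)).mpr
        (by linarith [div_nonneg (sq_nonneg (n : ℝ)) (sq_nonneg r)])
    have hn_lt := (add_sq_div_sq_lt_iff hr (Nat.cast_nonneg n)).mp hlt
    simp only [coe_product, Set.mem_prod, coe_Icc, Set.mem_Icc, coe_range, Set.mem_Iio]
    exact ⟨⟨hm, Nat.le_floor hm_lt.le⟩, by exact_mod_cast hn_lt.trans_le (hmono m)⟩
  rw [cylW, finsum_eq_sum_of_support_subset _ hsupp, sum_product]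
  refine sum_congr rfl fun m hm ↦ ?_
  rw [← sum_range_ite_lt_eq_two_mul_ceil_sub_one _ B (hmono m)]
  refine sum_congr rfl fun n _ ↦ ?_
  simp only [(mem_Icc.mp hm).1, true_and, add_sq_div_sq_lt_iff hr (Nat.cast_nonneg n)]

theorem sub_le_cylW (r lam : ℝ) (hr : 0 < r) (hlam : 0 ≤ lam) :
    π * r / 2 * lam - (2 * r + 1) * √lam ≤ cylW r lam := by
  set S := √lam
  have hSS : S ^ 2 = lam := sq_sqrt hlam
  have hsum := sub_le_sum_sqrt_sq_sub_sq S (sqrt_nonneg lam)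
  have hfloor : (⌊S⌋₊ : ℝ) ≤ S := Nat.floor_le (sqrt_nonneg lam)
  rw [hSS] at hsum
  calc π * r / 2 * lam - (2 * r + 1) * S
      ≤ 2 * r * ∑ m ∈ Icc 1 ⌊S⌋₊, √(lam - (m : ℝ) ^ 2) - ⌊S⌋₊ := by nlinarith
    _ = ∑ m ∈ Icc 1 ⌊S⌋₊, (2 * (r * √(lam - (m : ℝ) ^ 2)) - 1) := by
        simp [sum_sub_distrib, mul_sum, mul_assoc]
    _ ≤ ∑ m ∈ Icc 1 ⌊S⌋₊, ((2 * ⌈r * √(lam - (m : ℝ) ^ 2)⌉₊ - 1 : ℕ) : ℝ) :=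
        sum_le_sum fun m _ ↦ two_mul_sub_one_le_two_mul_ceil_sub_one _
    _ = cylW r lam := by rw [cylW_eq_sum_ceil r lam hr, Nat.cast_sum]

/-- for `r ∈ {1/2, 1}` and every `λ ≥ 0`,
`W(λ) ≥ (πr/2)λ − (2r+1)√λ − 2`. -/
theorem cylW_lower_bound (r : ℝ) (hr : r = 1 / 2 ∨ r = 1) (lam : ℝ) (hlam : 0 ≤ lam) :
    (cylW r lam : ℝ) ≥ π * r / 2 * lam - (2 * r + 1) * Real.sqrt lam - 2 := by
  have hr0 : 0 < r := by rcases hr with rfl | rfl <;> norm_num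
  linarith [sub_le_cylW r lam hr0 hlam]
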